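/- The minimum-energy curve E_min(ℰ) along the Gibbs family is convex: its second derivative with respect to ℰ equals -(1/β²)·(dβ/dℰ), which is positive since β is a strictly decreasing function of ℰ on (ln d_g, ln N). -/

import Mathlib

/-- Partition function of the classical Gibbs distribution. -/
noncomputable def gibbsZ (N : ℕ) (E : Fin N → ℝ) (β : ℝ) : ℝ :=
  ∑ i, Real.exp (-β * E i)

/-- Mean energy `⟨H⟩(β)` of the classical Gibbs distribution. -/
noncomputable def gibbsAvgH (N : ℕ) (E : Fin N → ℝ) (β : ℝ) : ℝ :=
  ∑ i, (Real.exp (-β * E i) / gibbsZ N E β) * E i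

/-- Shannon entropy `S(β)` of the classical Gibbs distribution. -/
noncomputable def gibbsEntropy (N : ℕ) (E : Fin N → ℝ) (β : ℝ) : ℝ :=
  -∑ i, (Real.exp (-β * E i) / gibbsZ N E β) *
    Real.log (Real.exp (-β * E i) / gibbsZ N E β)

/-- Multiplicity `d_g` of the minimum energy. -/
noncomputable def groundDeg (N : ℕ) (E : Fin N → ℝ) : ℕ :=
  (Finset.univ.filter fun i : Fin N => ∀ j, E i ≤ E j).card

/-!
Write `Var(β) > 0` for the variance of the energy under the Gibbs weights (positive because `E` is
not constant). Differentiating the moments gives `⟨H⟩' = -Var` and, from `S = β⟨H⟩ + log Z`,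
`S' = -β Var < 0` for `β > 0`. Hence `S` is strictly decreasing, its local inverse `β(ℰ)` is
continuous, and the inverse function theorem gives `β' = 1 / S'(β) < 0` and
`E_min' = ⟨H⟩'(β) β' = 1 / β`. One more differentiation yields `E_min'' = -β' / β² > 0`, and a
positive second derivative gives strict convexity.
-/

open Set Filter Topology

theorem continuousAt_of_local_left_inverse_of_strictAntiOn {f g : ℝ → ℝ} {s : Set ℝ} {a : ℝ}
    (hs : IsOpen s) (hf : ContinuousOn f s) (hf_anti : StrictAntiOn f s)
    (hg : ∀ᶠ y in 𝓝 a, g y ∈ s ∧ f (g y) = y) : ContinuousAt g a := by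
  set u := {y | g y ∈ s ∧ f (g y) = y}
  have ha : g a ∈ s ∧ f (g a) = a := hg.self_of_nhds
  have g_anti : StrictAntiOn g u := fun x hx y hy hxy => lt_of_not_ge fun hle => by
    have := hf_anti.antitoneOn hx.1 hy.1 hle
    rw [hx.2, hy.2] at this
    exact hxy.not_ge this
  have image_mem : g '' u ∈ 𝓝 (g a) := by
    have hf_at : ContinuousAt f (g a) := hf.continuousAt (hs.mem_nhds ha.1)
    filter_upwards [hs.mem_nhds ha.1, hf_at.preimage_mem_nhds (ha.2 ▸ hg)] with β hβs hβu
    exact ⟨f β, hβu, hf_anti.injOn hβu.1 hβs hβu.2⟩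
  exact g_anti.dual_right.continuousAt_of_image_mem_nhds hg image_mem

theorem deriv_deriv_eq_of_hasDerivAt_inv {F g : ℝ → ℝ} {x : ℝ}
    (hF : ∀ᶠ y in 𝓝 x, HasDerivAt F (g y)⁻¹ y) (hg : DifferentiableAt ℝ g x) (hgx : g x ≠ 0) :
    deriv (deriv F) x = -(g x) ^ (-2 : ℤ) * deriv g x := by
  have hderiv : deriv F =ᶠ[𝓝 x] fun y => (g y)⁻¹ := hF.mono fun y hy => hy.deriv
  rw [hderiv.deriv_eq, (hg.hasDerivAt.fun_inv hgx).deriv, zpow_neg, zpow_two, sq]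
  ring

noncomputable def gibbsProb (N : ℕ) (E : Fin N → ℝ) (β : ℝ) (i : Fin N) : ℝ :=
  Real.exp (-β * E i) / gibbsZ N E β

noncomputable def gibbsMoment (N : ℕ) (E : Fin N → ℝ) (k : ℕ) (β : ℝ) : ℝ :=
  ∑ i, E i ^ k * Real.exp (-β * E i)

noncomputable def gibbsVar (N : ℕ) (E : Fin N → ℝ) (β : ℝ) : ℝ :=
  ∑ i, gibbsProb N E β i * (E i - gibbsAvgH N E β) ^ 2

section Gibbs

variable {N : ℕ} {E : Fin N → ℝ}

theorem gibbsZ_eq_gibbsMoment_zero : gibbsZ N E = gibbsMoment N E 0 := by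
  ext β
  simp [gibbsZ, gibbsMoment]

theorem hasDerivAt_gibbsMoment (k : ℕ) (β : ℝ) :
    HasDerivAt (gibbsMoment N E k) (-gibbsMoment N E (k + 1) β) β := by
  have hterm (i : Fin N) : HasDerivAt (fun b => E i ^ k * Real.exp (-b * E i))
      (-(E i ^ (k + 1) * Real.exp (-β * E i))) β :=
    ((((hasDerivAt_id' β).fun_neg.mul_const (E i)).exp).const_mul (E i ^ k)).congr_deriv (by ring)
  show HasDerivAt (fun b => ∑ i, E i ^ k * Real.exp (-b * E i)) _ β
  refine (HasDerivAt.fun_sum fun i _ => hterm i).congr_deriv ?_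
  simp only [gibbsMoment, Finset.sum_neg_distrib]

theorem gibbsZ_pos (hN : 0 < N) (β : ℝ) : 0 < gibbsZ N E β :=
  Finset.sum_pos (fun _ _ => Real.exp_pos _) (Finset.univ_nonempty_iff.2 ⟨⟨0, hN⟩⟩)

theorem gibbsProb_pos (hN : 0 < N) (β : ℝ) (i : Fin N) : 0 < gibbsProb N E β i :=
  div_pos (Real.exp_pos _) (gibbsZ_pos hN β)

theorem sum_gibbsProb (hN : 0 < N) (β : ℝ) : ∑ i, gibbsProb N E β i = 1 := by
  unfold gibbsProb
  rw [← Finset.sum_div, ← gibbsZ, div_self (gibbsZ_pos hN β).ne']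

theorem gibbsAvgH_eq_sum_gibbsProb (β : ℝ) :
    gibbsAvgH N E β = ∑ i, gibbsProb N E β i * E i := rfl

theorem gibbsAvgH_eq_div (β : ℝ) :
    gibbsAvgH N E β = gibbsMoment N E 1 β / gibbsZ N E β := by
  simp only [gibbsAvgH, gibbsMoment, pow_one, Finset.sum_div]
  exact Finset.sum_congr rfl fun i _ => by ring

theorem gibbsVar_eq (hN : 0 < N) (β : ℝ) :
    gibbsVar N E β = gibbsMoment N E 2 β / gibbsZ N E β - gibbsAvgH N E β ^ 2 := by
  have hsecond : gibbsMoment N E 2 β / gibbsZ N E β = ∑ i, gibbsProb N E β i * E i ^ 2 := by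
    simp only [gibbsMoment, gibbsProb, Finset.sum_div]
    exact Finset.sum_congr rfl fun i _ => by ring
  set A := gibbsAvgH N E β
  calc gibbsVar N E β
      = ∑ i, gibbsProb N E β i * E i ^ 2 - 2 * A * ∑ i, gibbsProb N E β i * E i
          + A ^ 2 * ∑ i, gibbsProb N E β i := by
        simp only [gibbsVar, Finset.mul_sum, ← Finset.sum_sub_distrib, ← Finset.sum_add_distrib]
        exact Finset.sum_congr rfl fun i _ => by ring
    _ = gibbsMoment N E 2 β / gibbsZ N E β - A ^ 2 := by
        rw [hsecond, ← gibbsAvgH_eq_sum_gibbsProb, sum_gibbsProb hN]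
        ring

theorem gibbsVar_pos (hN : 0 < N) (hE : ∃ i j, E i ≠ E j) (β : ℝ) : 0 < gibbsVar N E β := by
  obtain ⟨i, j, hij⟩ := hE
  obtain ⟨k, hk⟩ : ∃ k, E k ≠ gibbsAvgH N E β := by
    by_contra! h
    exact hij ((h i).trans (h j).symm)
  refine Finset.sum_pos' (fun i _ => mul_nonneg (gibbsProb_pos hN β i).le (sq_nonneg _))
    ⟨k, Finset.mem_univ k, ?_⟩
  exact mul_pos (gibbsProb_pos hN β k) (pow_two_pos_of_ne_zero (sub_ne_zero.2 hk))

theorem hasDerivAt_gibbsAvgH (hN : 0 < N) (β : ℝ) :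
    HasDerivAt (gibbsAvgH N E) (-gibbsVar N E β) β := by
  have hM0 : gibbsMoment N E 0 β ≠ 0 := gibbsZ_eq_gibbsMoment_zero ▸ (gibbsZ_pos hN β).ne'
  rw [funext gibbsAvgH_eq_div, gibbsZ_eq_gibbsMoment_zero]
  refine ((hasDerivAt_gibbsMoment 1 β).div (hasDerivAt_gibbsMoment 0 β) hM0).congr_deriv ?_
  rw [gibbsVar_eq hN, gibbsAvgH_eq_div, gibbsZ_eq_gibbsMoment_zero]
  field_simp
  ring

theorem gibbsEntropy_eq (hN : 0 < N) (β : ℝ) :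
    gibbsEntropy N E β = β * gibbsAvgH N E β + Real.log (gibbsZ N E β) := by
  have hlog (i : Fin N) : Real.log (gibbsProb N E β i) = -β * E i - Real.log (gibbsZ N E β) := by
    rw [gibbsProb, Real.log_div (Real.exp_ne_zero _) (gibbsZ_pos hN β).ne', Real.log_exp]
  calc gibbsEntropy N E β
      = -∑ i, gibbsProb N E β i * Real.log (gibbsProb N E β i) := rfl
    _ = β * ∑ i, gibbsProb N E β i * E i
          + Real.log (gibbsZ N E β) * ∑ i, gibbsProb N E β i := by
        simp only [hlog, Finset.mul_sum, ← Finset.sum_add_distrib, ← Finset.sum_neg_distrib]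
        exact Finset.sum_congr rfl fun i _ => by ring
    _ = β * gibbsAvgH N E β + Real.log (gibbsZ N E β) := by
        rw [sum_gibbsProb hN, mul_one, gibbsAvgH_eq_sum_gibbsProb]

theorem hasDerivAt_gibbsEntropy (hN : 0 < N) (β : ℝ) :
    HasDerivAt (gibbsEntropy N E) (-β * gibbsVar N E β) β := by
  have hZ := gibbsZ_pos (E := E) hN β
  have hZ' : HasDerivAt (gibbsZ N E) (-gibbsMoment N E 1 β) β := by
    simpa [gibbsZ_eq_gibbsMoment_zero] using hasDerivAt_gibbsMoment (E := E) 0 β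
  have h := ((hasDerivAt_id' β).mul (hasDerivAt_gibbsAvgH (E := E) hN β)).add (hZ'.log hZ.ne')
  rw [funext (gibbsEntropy_eq hN)]
  refine h.congr_deriv ?_
  rw [gibbsAvgH_eq_div]
  field_simp
  ring

theorem gibbsEntropy_strictAntiOn (hN : 0 < N) (hE : ∃ i j, E i ≠ E j) :
    StrictAntiOn (gibbsEntropy N E) (Ioi 0) := by
  refine strictAntiOn_of_deriv_neg (convex_Ioi 0)
    (fun β _ => (hasDerivAt_gibbsEntropy hN β).continuousAt.continuousWithinAt) fun β hβ => ?_
  rw [interior_Ioi] at hβ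
  rw [(hasDerivAt_gibbsEntropy hN β).deriv]
  exact mul_neg_of_neg_of_pos (neg_neg_of_pos hβ) (gibbsVar_pos hN hE β)

theorem hasDerivAt_of_gibbsEntropy_local_left_inverse (hN : 0 < N) (hE : ∃ i j, E i ≠ E j)
    {b : ℝ → ℝ} {ℰ : ℝ} (hb : ∀ᶠ y in 𝓝 ℰ, 0 < b y ∧ gibbsEntropy N E (b y) = y) :
    HasDerivAt b (-b ℰ * gibbsVar N E (b ℰ))⁻¹ ℰ := by
  have hcont : ContinuousAt b ℰ :=
    continuousAt_of_local_left_inverse_of_strictAntiOn isOpen_Ioi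
      (fun β _ => (hasDerivAt_gibbsEntropy hN β).continuousAt.continuousWithinAt)
      (gibbsEntropy_strictAntiOn hN hE) hb
  have hslope : -b ℰ * gibbsVar N E (b ℰ) ≠ 0 :=
    (mul_neg_of_neg_of_pos (neg_neg_of_pos hb.self_of_nhds.1) (gibbsVar_pos hN hE _)).ne
  exact .of_local_left_inverse hcont (hasDerivAt_gibbsEntropy hN _) hslope
    (hb.mono fun _ hy => hy.2)

theorem hasDerivAt_gibbsAvgH_comp_of_gibbsEntropy_local_left_inverse (hN : 0 < N)
    (hE : ∃ i j, E i ≠ E j) {b : ℝ → ℝ} {ℰ : ℝ}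
    (hb : ∀ᶠ y in 𝓝 ℰ, 0 < b y ∧ gibbsEntropy N E (b y) = y) :
    HasDerivAt (fun x => gibbsAvgH N E (b x)) (b ℰ)⁻¹ ℰ := by
  have hβ := hb.self_of_nhds.1.ne'
  have hV := (gibbsVar_pos hN hE (b ℰ)).ne'
  refine ((hasDerivAt_gibbsAvgH hN _).comp ℰ
    (hasDerivAt_of_gibbsEntropy_local_left_inverse hN hE hb)).congr_deriv ?_
  field_simp

end Gibbs

/-- with `β(ℰ) = binv ℰ` the inverse of the Gibbs entropy, the
minimum-energy curve `E_min = ⟨H⟩ ∘ binv` has second derivative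
`E_min''(ℰ) = -β(ℰ)⁻² · β'(ℰ) > 0` (since `β` is strictly decreasing in `ℰ`),
hence `E_min` is strictly convex on `(ln d_g, ln N)`. -/
theorem stmt_15 (N : ℕ) (hN : 0 < N) (E : Fin N → ℝ) (hE : ∃ i j, E i ≠ E j)
    (binv : ℝ → ℝ)
    (hbinv : ∀ ℰ ∈ Set.Ioo (Real.log (groundDeg N E)) (Real.log N),
      0 < binv ℰ ∧ gibbsEntropy N E (binv ℰ) = ℰ) :
    (∀ ℰ ∈ Set.Ioo (Real.log (groundDeg N E)) (Real.log N),
        deriv (deriv (fun x => gibbsAvgH N E (binv x))) ℰ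
            = -(binv ℰ) ^ (-2 : ℤ) * deriv binv ℰ ∧
          0 < deriv (deriv (fun x => gibbsAvgH N E (binv x))) ℰ) ∧
      StrictConvexOn ℝ (Set.Ioo (Real.log (groundDeg N E)) (Real.log N))
        (fun x => gibbsAvgH N E (binv x)) := by
  set I := Ioo (Real.log (groundDeg N E)) (Real.log N)
  have hb_near (ℰ : ℝ) (hℰ : ℰ ∈ I) : ∀ᶠ y in 𝓝 ℰ, 0 < binv y ∧ gibbsEntropy N E (binv y) = y :=
    eventually_of_mem (isOpen_Ioo.mem_nhds hℰ) hbinv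
  have hEmin' (ℰ : ℝ) (hℰ : ℰ ∈ I) : HasDerivAt (fun x => gibbsAvgH N E (binv x)) (binv ℰ)⁻¹ ℰ :=
    hasDerivAt_gibbsAvgH_comp_of_gibbsEntropy_local_left_inverse hN hE (hb_near ℰ hℰ)
  have hEmin'' (ℰ : ℝ) (hℰ : ℰ ∈ I) :
      deriv (deriv (fun x => gibbsAvgH N E (binv x))) ℰ = -(binv ℰ) ^ (-2 : ℤ) * deriv binv ℰ ∧
        0 < deriv (deriv (fun x => gibbsAvgH N E (binv x))) ℰ := by
    have hβ := hasDerivAt_of_gibbsEntropy_local_left_inverse hN hE (hb_near ℰ hℰ)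
    have hβpos := (hbinv ℰ hℰ).1
    have hβ'neg : deriv binv ℰ < 0 := by
      rw [hβ.deriv]
      exact inv_lt_zero.2 (mul_neg_of_neg_of_pos (neg_neg_of_pos hβpos) (gibbsVar_pos hN hE _))
    have heq := deriv_deriv_eq_of_hasDerivAt_inv
      (eventually_of_mem (isOpen_Ioo.mem_nhds hℰ) hEmin') hβ.differentiableAt hβpos.ne'
    exact ⟨heq, heq ▸ mul_pos_of_neg_of_neg (neg_neg_of_pos (zpow_pos hβpos _)) hβ'neg⟩
  refine ⟨hEmin'', strictConvexOn_of_deriv2_pos (convex_Ioo _ _)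
    (fun x hx => (hEmin' x hx).continuousAt.continuousWithinAt) fun x hx => ?_⟩
  rw [interior_Ioo] at hx
  exact (hEmin'' x hx).2
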